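/- arXiv:2411.06905 — 3 statements merged into one kernel-verified Lean document; each statement's English description precedes it below -/
import Mathlib

section
/- Let μ ∈ ℝ, σ > 0 and b > μ. The infimum, over all probability measures P on ℝ with finite second moment, mean μ and variance σ², of P((-∞, b]) equals (b − μ)² / (σ² + (b − μ)²). (This is the tight worst-case value of the chance constraint over the fixed-moment ambiguity set, i.e. the sharpness of Cantelli's inequality used in equation (15) of the paper.) -/
open MeasureTheory Set

lemma integrable_dirac'' (f : ℝ → ℝ) (a : ℝ) : Integrable f (Measure.dirac a) :=
  (integrable_const (f a)).congr (ae_eq_dirac f).symm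

/-- Mixture of two Dirac measures. -/
noncomputable def cantelliMix (q r a c : ℝ) : Measure ℝ :=
  ENNReal.ofReal q • Measure.dirac a + ENNReal.ofReal r • Measure.dirac c

lemma cantelliMix_integrable (q r a c : ℝ) (f : ℝ → ℝ) : Integrable f (cantelliMix q r a c) :=
  ((integrable_dirac'' f a).smul_measure ENNReal.ofReal_ne_top).add_measure
    ((integrable_dirac'' f c).smul_measure ENNReal.ofReal_ne_top)

lemma cantelliMix_integral (q r a c : ℝ) (hq : 0 ≤ q) (hr : 0 ≤ r) (f : ℝ → ℝ) :
    ∫ x, f x ∂(cantelliMix q r a c) = q * f a + r * f c := by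
  rw [cantelliMix, integral_add_measure
      ((integrable_dirac'' f a).smul_measure ENNReal.ofReal_ne_top)
      ((integrable_dirac'' f c).smul_measure ENNReal.ofReal_ne_top),
    integral_smul_measure, integral_smul_measure, integral_dirac, integral_dirac,
    ENNReal.toReal_ofReal hq, ENNReal.toReal_ofReal hr, smul_eq_mul, smul_eq_mul]

/-- Two-point measure realizing the value `s² / (σ² + s²)` for `P (Iic b)`. -/
lemma cantelli_two_point (μ σ b s : ℝ) (hσ : 0 < σ) (hb : μ < b) (hs : b < μ + s) :
    ∃ P : Measure ℝ, IsProbabilityMeasure P ∧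
        Integrable (fun x : ℝ => x ^ 2) P ∧
        (∫ x, x ∂P) = μ ∧
        (∫ x, (x - μ) ^ 2 ∂P) = σ ^ 2 ∧
        (P (Set.Iic b)).toReal = s ^ 2 / (σ ^ 2 + s ^ 2) := by
  have hs0 : 0 < s := by linarith
  have hK : 0 < σ ^ 2 + s ^ 2 := by positivity
  set q : ℝ := σ ^ 2 / (σ ^ 2 + s ^ 2) with hqdef
  have hq0 : 0 ≤ q := by positivity
  have hq1 : q ≤ 1 := by
    rw [hqdef, div_le_one hK]; nlinarith
  have hr0 : 0 ≤ 1 - q := by linarith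
  refine ⟨cantelliMix q (1 - q) (μ + s) (μ - σ ^ 2 / s), ?_,
    cantelliMix_integrable _ _ _ _ _, ?_, ?_, ?_⟩
  · constructor
    rw [cantelliMix]
    simp [Measure.dirac_apply, ← ENNReal.ofReal_add hq0 hr0]
  · rw [cantelliMix_integral _ _ _ _ hq0 hr0]
    rw [hqdef]; field_simp; ring
  · rw [cantelliMix_integral _ _ _ _ hq0 hr0]
    rw [hqdef]; field_simp; ring
  · rw [cantelliMix, Measure.add_apply, Measure.smul_apply, Measure.smul_apply,
      Measure.dirac_apply, Measure.dirac_apply]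
    have h1 : (μ + s) ∉ Iic b := by simp [Set.mem_Iic]; linarith
    have h2 : (μ - σ ^ 2 / s) ∈ Iic b := by
      have : 0 < σ ^ 2 / s := by positivity
      simp [Set.mem_Iic]; nlinarith
    rw [Set.indicator_of_notMem h1, Set.indicator_of_mem h2]
    simp [ENNReal.toReal_ofReal hr0]
    rw [hqdef]; field_simp; ring

/-- Cantelli's inequality: the lower bound. -/
lemma cantelli_bound (μ σ b : ℝ) (hσ : 0 < σ) (hb : μ < b) (P : Measure ℝ)
    (hP : IsProbabilityMeasure P) (hi : Integrable (fun x : ℝ => x ^ 2) P)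
    (hm : (∫ x, x ∂P) = μ) (hv : (∫ x, (x - μ) ^ 2 ∂P) = σ ^ 2) :
    (b - μ) ^ 2 / (σ ^ 2 + (b - μ) ^ 2) ≤ (P (Set.Iic b)).toReal := by
  set t : ℝ := b - μ with htdef
  have ht : 0 < t := by simp [htdef]; linarith
  set u : ℝ := σ ^ 2 / t with hudef
  have hu : 0 < u := by positivity
  have hId : Integrable (fun x : ℝ => x) P := by
    have h2 : MemLp (fun x : ℝ => x) 2 P :=
      (memLp_two_iff_integrable_sq measurable_id.aestronglyMeasurable).2 hi
    exact h2.integrable (by norm_num)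
  have hif : Integrable (fun x : ℝ => (x - μ + u) ^ 2) P := by
    have : (fun x : ℝ => (x - μ + u) ^ 2)
        = fun x => x ^ 2 + ((2 * (u - μ)) * x + (u - μ) ^ 2) := by funext x; ring
    rw [this]
    exact hi.add ((hId.const_mul _).add (integrable_const _))
  have hint : ∫ x, (x - μ + u) ^ 2 ∂P = σ ^ 2 + u ^ 2 := by
    have hi2 : Integrable (fun x : ℝ => (x - μ) ^ 2) P := by
      have : (fun x : ℝ => (x - μ) ^ 2)
          = fun x => x ^ 2 + ((-2 * μ) * x + μ ^ 2) := by funext x; ring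
      rw [this]
      exact hi.add ((hId.const_mul _).add (integrable_const _))
    have heq : (fun x : ℝ => (x - μ + u) ^ 2)
        = fun x => (x - μ) ^ 2 + ((2 * u) * x + (u ^ 2 - 2 * u * μ)) := by funext x; ring
    have hg2 : Integrable (fun x : ℝ => 2 * u * x) P := hId.const_mul _
    have hg : Integrable (fun x : ℝ => 2 * u * x + (u ^ 2 - 2 * u * μ)) P :=
      hg2.add (integrable_const _)
    rw [heq, integral_add hi2 hg, integral_add hg2 (integrable_const _),
      integral_const_mul, hm, hv, integral_const]
    simp
  have key := mul_meas_ge_le_integral_of_nonneg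
    (Filter.Eventually.of_forall fun x => sq_nonneg (x - μ + u)) hif ((t + u) ^ 2)
  rw [hint] at key
  have hsub : Set.Ioi b ⊆ {x : ℝ | (t + u) ^ 2 ≤ (x - μ + u) ^ 2} := by
    intro x hx
    simp only [Set.mem_Ioi] at hx
    have h1 : t + u ≤ x - μ + u := by simp [htdef]; linarith
    exact pow_le_pow_left₀ (by linarith) h1 2
  have hmono : (P (Set.Ioi b)).toReal ≤ (P {x : ℝ | (t + u) ^ 2 ≤ (x - μ + u) ^ 2}).toReal :=
    ENNReal.toReal_mono (measure_ne_top P _) (measure_mono hsub)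
  have key2 : (t + u) ^ 2 * (P (Set.Ioi b)).toReal ≤ σ ^ 2 + u ^ 2 :=
    le_trans (by rw [measureReal_def]; nlinarith [sq_nonneg (t + u)]) key
  have hsplit : (P (Set.Iic b)).toReal + (P (Set.Ioi b)).toReal = 1 := by
    have : P (Set.Iic b) + P (Set.Ioi b) = 1 := by
      rw [← measure_union (Set.Iic_disjoint_Ioi le_rfl) measurableSet_Ioi]
      simp [Set.Iic_union_Ioi]
    have h2 := congrArg ENNReal.toReal this
    rwa [ENNReal.toReal_add (measure_ne_top P _) (measure_ne_top P _)] at h2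
  set r : ℝ := (P (Set.Iic b)).toReal with hrdef
  have hr0 : 0 ≤ r := ENNReal.toReal_nonneg
  have hut : u * t = σ ^ 2 := by rw [hudef]; field_simp
  have h1 : (t + u) ^ 2 * (1 - r) ≤ σ ^ 2 + u ^ 2 := by
    have : (P (Set.Ioi b)).toReal = 1 - r := by linarith
    rwa [this] at key2
  have h3 : (t + u) * ((t + u) * (1 - r) - u) ≤ 0 := by nlinarith [h1, hut]
  have h4 : (t + u) * (1 - r) - u ≤ 0 := by
    by_contra h
    push_neg at h
    nlinarith [mul_pos (add_pos ht hu) h]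
  have h5 : t ≤ r * (t + u) := by nlinarith [h4]
  rw [div_le_iff₀ (by positivity)]
  nlinarith [mul_le_mul_of_nonneg_left h5 ht.le, hut]

/-- Sharpness of Cantelli's inequality: the infimum of `P (Iic b)` over all
probability measures on `ℝ` with finite second moment, mean `μ` and variance
`σ²`, equals `(b - μ)² / (σ² + (b - μ)²)` whenever `σ > 0` and `b > μ`. -/
theorem cantelli_sharp
    (μ σ b : ℝ) (hσ : 0 < σ) (hb : μ < b) :
    sInf {r : ℝ | ∃ P : Measure ℝ, IsProbabilityMeasure P ∧
        Integrable (fun x : ℝ => x ^ 2) P ∧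
        (∫ x, x ∂P) = μ ∧
        (∫ x, (x - μ) ^ 2 ∂P) = σ ^ 2 ∧
        r = (P (Set.Iic b)).toReal} =
      (b - μ) ^ 2 / (σ ^ 2 + (b - μ) ^ 2) := by
  have ht : 0 < b - μ := by linarith
  apply csInf_eq_of_forall_ge_of_forall_gt_exists_lt
  · obtain ⟨P, h1, h2, h3, h4, h5⟩ := cantelli_two_point μ σ b (b - μ + 1) hσ hb (by linarith)
    exact ⟨_, P, h1, h2, h3, h4, rfl⟩
  · rintro r ⟨P, h1, h2, h3, h4, rfl⟩
    exact cantelli_bound μ σ b hσ hb P h1 h2 h3 h4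
  · intro w hw
    have hc0 : 0 < (b - μ) ^ 2 / (σ ^ 2 + (b - μ) ^ 2) := by positivity
    have hw0 : 0 < w := hc0.trans hw
    obtain ⟨s, hts, hsw⟩ : ∃ s : ℝ, b - μ < s ∧ s ^ 2 * (1 - w) < w * σ ^ 2 := by
      by_cases h1 : 1 ≤ w
      · exact ⟨b - μ + 1, by linarith, by nlinarith [sq_nonneg (b - μ + 1)]⟩
      · push_neg at h1
        have h1w : 0 < 1 - w := by linarith
        set K : ℝ := w * σ ^ 2 / (1 - w) with hKdef
        have hK : 0 < K := by positivity
        have htK : (b - μ) ^ 2 < K := by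
          rw [hKdef, lt_div_iff₀ h1w]
          have := (div_lt_iff₀ (by positivity)).1 hw
          nlinarith
        have htsq : b - μ < Real.sqrt K := by
          have := Real.sqrt_lt_sqrt (sq_nonneg (b - μ)) htK
          rwa [Real.sqrt_sq ht.le] at this
        refine ⟨(b - μ + Real.sqrt K) / 2, by linarith, ?_⟩
        have h0 : 0 ≤ (b - μ + Real.sqrt K) / 2 := by
          have := Real.sqrt_nonneg K
          linarith
        have hlt : (b - μ + Real.sqrt K) / 2 < Real.sqrt K := by linarith
        have hs2 : ((b - μ + Real.sqrt K) / 2) ^ 2 < K := by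
          nlinarith [Real.sq_sqrt hK.le, hlt, h0, Real.sqrt_nonneg K]
        have hKw : K * (1 - w) = w * σ ^ 2 := by
          rw [hKdef]; field_simp
        nlinarith [hs2, h1w]
    obtain ⟨P, h1, h2, h3, h4, h5⟩ := cantelli_two_point μ σ b s hσ hb (by linarith)
    refine ⟨(P (Set.Iic b)).toReal, ⟨P, h1, h2, h3, h4, rfl⟩, ?_⟩
    rw [h5, div_lt_iff₀ (by positivity)]
    nlinarith [hsw]
end

section
/- Let S be a nonempty subset of ℝ × (0, ∞) (pairs (m, s) of admissible means and standard deviations) and let b ∈ ℝ satisfy b > m for every (m, s) ∈ S. Then the infimum, over all probability measures P on ℝ with finite second moment whose mean-and-standard-deviation pair (μ_P, σ_P) lies in S, of P((-∞, b]), equals the infimum over (m, s) ∈ S of (b − m)² / (s² + (b − m)²). (This makes precise the paper's two-layer decomposition (14) combined with the tight Cantelli bound (15) for the decision-dependent ambiguity set R₂.) -/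
/-!
Cantelli's inequality `P (X ≤ b) ≥ t² / (σ² + t²)` for `t = b - 𝔼 X > 0`, obtained from Markov's
inequality for `(X - 𝔼 X + σ² / t)²`, bounds the left infimum below by the right one. Conversely,
the two-point law with atoms `m - s² / u` and `m + u` has mean `m`, standard deviation `s`, and
puts mass `u² / (s² + u²)` on `(-∞, b]` once `u > b - m`; letting `u ↓ b - m` shows the bound is
approached.
-/

open MeasureTheory Set

namespace ProbabilityTheory

variable {Ω : Type*} {mΩ : MeasurableSpace Ω} {μ : Measure Ω} [IsProbabilityMeasure μ]
  {X : Ω → ℝ}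

lemma integral_sub_const_sq (hX : MemLp X 2 μ) (c : ℝ) :
    ∫ ω, (X ω - c) ^ 2 ∂μ = Var[X; μ] + (μ[X] - c) ^ 2 := by
  have hvar := variance_eq_sub (X := fun ω ↦ X ω - c) (hX.sub (memLp_const c))
  rw [variance_sub_const hX.aestronglyMeasurable,
    integral_sub (hX.integrable one_le_two) (integrable_const c)] at hvar
  simp only [Pi.pow_apply, integral_const, probReal_univ, smul_eq_mul, one_mul] at hvar
  linarith

theorem measureReal_gt_le_variance_div (hX : MemLp X 2 μ) {b : ℝ} (hb : μ[X] < b) :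
    μ.real {ω | b < X ω} ≤ Var[X; μ] / (Var[X; μ] + (b - μ[X]) ^ 2) := by
  set V := Var[X; μ]
  set t := b - μ[X]
  have ht : 0 < t := sub_pos.2 hb
  have hV : 0 ≤ V := variance_nonneg X μ
  -- the shift `c = μ[X] - V / t` optimizes the Markov bound for `(X - c) ^ 2`
  set c := μ[X] - V / t
  have hbc : b - c = t + V / t := by ring
  have hbc0 : 0 < b - c := by rw [hbc]; positivity
  have hsub : {ω | b < X ω} ⊆ {ω | (b - c) ^ 2 ≤ (X ω - c) ^ 2} := fun ω hω ↦
    pow_le_pow_left₀ hbc0.le (sub_le_sub_right (le_of_lt hω) c) 2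
  have markov := mul_meas_ge_le_integral_of_nonneg (.of_forall fun ω ↦ sq_nonneg (X ω - c))
    (hX.sub (memLp_const c)).integrable_sq ((b - c) ^ 2)
  rw [integral_sub_const_sq hX, hbc, show μ[X] - c = V / t by ring] at markov
  have key : (t + V / t) ^ 2 * μ.real {ω | b < X ω} ≤ V + (V / t) ^ 2 :=
    (mul_le_mul_of_nonneg_left (measureReal_mono hsub) (sq_nonneg _)).trans (by rwa [hbc])
  have hVt : 0 < V + t ^ 2 := by positivity
  rw [le_div_iff₀ hVt]
  refine le_of_mul_le_mul_left ?_ hVt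
  calc (V + t ^ 2) * (μ.real {ω | b < X ω} * (V + t ^ 2))
      = t ^ 2 * ((t + V / t) ^ 2 * μ.real {ω | b < X ω}) := by field_simp; ring
    _ ≤ t ^ 2 * (V + (V / t) ^ 2) := by gcongr
    _ = (V + t ^ 2) * V := by field_simp; ring

theorem sq_div_variance_add_sq_le_measureReal_le (hX : MemLp X 2 μ) {b : ℝ} (hb : μ[X] < b) :
    (b - μ[X]) ^ 2 / (Var[X; μ] + (b - μ[X]) ^ 2) ≤ μ.real {ω | X ω ≤ b} := by
  have hcompl : {ω | X ω ≤ b} = {ω | b < X ω}ᶜ := by ext; simp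
  have hVt : 0 < Var[X; μ] + (b - μ[X]) ^ 2 := by
    have := variance_nonneg X μ; have := sub_pos.2 hb; positivity
  rw [hcompl, probReal_compl_eq_one_sub₀ (nullMeasurableSet_lt aemeasurable_const hX.aemeasurable)]
  have := measureReal_gt_le_variance_div hX hb
  have : (b - μ[X]) ^ 2 / (Var[X; μ] + (b - μ[X]) ^ 2)
      = 1 - Var[X; μ] / (Var[X; μ] + (b - μ[X]) ^ 2) := by field_simp; ring
  linarith

end ProbabilityTheory

open ProbabilityTheory in
theorem sq_div_integral_add_sq_le_measureReal_Iic {P : Measure ℝ} [IsProbabilityMeasure P]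
    (h2 : Integrable (fun x ↦ x ^ 2) P) {b : ℝ} (hb : ∫ x, x ∂P < b) :
    (b - ∫ x, x ∂P) ^ 2 / (∫ x, (x - ∫ y, y ∂P) ^ 2 ∂P + (b - ∫ x, x ∂P) ^ 2) ≤ P.real (Iic b) := by
  have hX : MemLp id 2 P := (memLp_two_iff_integrable_sq aestronglyMeasurable_id).2 h2
  have := sq_div_variance_add_sq_le_measureReal_le hX hb
  rwa [variance_eq_integral measurable_id.aemeasurable] at this

section TwoPoint

variable {α E : Type*} [MeasurableSpace α] [NormedAddCommGroup E]

noncomputable def twoPoint (p : ℝ) (a c : α) : Measure α :=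
  ENNReal.ofReal p • Measure.dirac a + ENNReal.ofReal (1 - p) • Measure.dirac c

variable {p : ℝ} {a c : α}

lemma isProbabilityMeasure_twoPoint (hp₀ : 0 ≤ p) (hp₁ : p ≤ 1) :
    IsProbabilityMeasure (twoPoint p a c) := by
  constructor
  simp [twoPoint, ← ENNReal.ofReal_add hp₀ (sub_nonneg.2 hp₁)]

lemma measureReal_twoPoint {s : Set α} (hs : MeasurableSet s) (ha : a ∈ s) (hc : c ∉ s)
    (hp₀ : 0 ≤ p) : (twoPoint p a c).real s = p := by
  simp [twoPoint, measureReal_def, Measure.dirac_apply' _ hs, ha, hc, hp₀]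

variable [MeasurableSingletonClass α]

lemma integrable_smul_dirac (f : α → E) (w : ℝ) (x : α) :
    Integrable f (ENNReal.ofReal w • Measure.dirac x) :=
  (integrable_dirac (by simp)).smul_measure ENNReal.ofReal_ne_top

lemma integrable_twoPoint (f : α → E) : Integrable f (twoPoint p a c) :=
  (integrable_smul_dirac f p a).add_measure (integrable_smul_dirac f _ c)

lemma integral_twoPoint [NormedSpace ℝ E] [CompleteSpace E] (hp₀ : 0 ≤ p) (hp₁ : p ≤ 1)
    (f : α → E) :
    ∫ x, f x ∂twoPoint p a c = p • f a + (1 - p) • f c := by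
  rw [twoPoint, integral_add_measure (integrable_smul_dirac f p a) (integrable_smul_dirac f _ c),
    integral_smul_measure, integral_smul_measure, integral_dirac, integral_dirac,
    ENNReal.toReal_ofReal hp₀, ENNReal.toReal_ofReal (sub_nonneg.2 hp₁)]

end TwoPoint

lemma exists_measure_integral_variance_measureReal_Iic {m s u b : ℝ} (hmb : m ≤ b)
    (hu : b - m < u) :
    ∃ P : Measure ℝ, IsProbabilityMeasure P ∧ Integrable (fun x ↦ x ^ 2) P ∧
      ∫ x, x ∂P = m ∧ ∫ x, (x - m) ^ 2 ∂P = s ^ 2 ∧ P.real (Iic b) = u ^ 2 / (s ^ 2 + u ^ 2) := by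
  have hu₀ : 0 < u := by linarith
  set p := u ^ 2 / (s ^ 2 + u ^ 2)
  have hp₀ : 0 ≤ p := by positivity
  have hp₁ : p ≤ 1 := div_le_one_of_le₀ (by nlinarith) (by positivity)
  refine ⟨twoPoint p (m - s ^ 2 / u) (m + u), isProbabilityMeasure_twoPoint hp₀ hp₁,
    integrable_twoPoint _, ?_, ?_, ?_⟩
  · rw [integral_twoPoint hp₀ hp₁]
    simp only [p, smul_eq_mul]
    field_simp
    ring
  · rw [integral_twoPoint hp₀ hp₁]
    simp only [p, smul_eq_mul]
    field_simp
    ring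
  · refine measureReal_twoPoint measurableSet_Iic ?_ ?_ hp₀
    · simp only [mem_Iic]
      have : 0 ≤ s ^ 2 / u := by positivity
      linarith
    · simp only [mem_Iic, not_le]
      linarith

theorem csInf_eq_csInf_of_forall_exists_le_of_forall_gt_exists_le {α : Type*}
    [ConditionallyCompleteLinearOrder α] [DenselyOrdered α] [NoMaxOrder α] {s t : Set α}
    (ht : BddBelow t) (hs : ∀ x ∈ s, ∃ y ∈ t, y ≤ x)
    (hts : ∀ y ∈ t, ∀ z, y < z → ∃ x ∈ s, x ≤ z) :
    sInf s = sInf t := by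
  rcases t.eq_empty_or_nonempty with rfl | ⟨y, hy⟩
  · rw [eq_empty_of_forall_notMem (s := s) fun x hx ↦ by simpa using hs x hx]
  obtain ⟨x, hx, -⟩ := hts y hy _ (exists_gt y).choose_spec
  have hs_bdd : BddBelow s := by
    obtain ⟨L, hL⟩ := ht
    exact ⟨L, fun x hx ↦ by obtain ⟨y, hy, hyx⟩ := hs x hx; exact (hL hy).trans hyx⟩
  refine le_antisymm (le_csInf ⟨y, hy⟩ fun y hy ↦ ?_) (le_csInf ⟨x, hx⟩ fun x hx ↦ ?_)
  · refine le_of_forall_gt_imp_ge_of_dense fun z hz ↦ ?_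
    obtain ⟨x, hx, hxz⟩ := hts y hy z hz
    exact (csInf_le hs_bdd hx).trans hxz
  · obtain ⟨y, hy, hyx⟩ := hs x hx
    exact (csInf_le ht hy).trans hyx

theorem worst_case_chance_constraint_decomposition_general
    (S : Set (ℝ × ℝ))
    (hSpos : ∀ p ∈ S, 0 < p.2)
    (b : ℝ) (hb : ∀ p ∈ S, p.1 < b) :
    sInf {r : ℝ | ∃ P : Measure ℝ, IsProbabilityMeasure P ∧
        Integrable (fun x : ℝ => x ^ 2) P ∧
        ((∫ x, x ∂P), Real.sqrt (∫ x, (x - ∫ y, y ∂P) ^ 2 ∂P)) ∈ S ∧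
        r = (P (Set.Iic b)).toReal} =
      sInf ((fun p : ℝ × ℝ => (b - p.1) ^ 2 / (p.2 ^ 2 + (b - p.1) ^ 2)) '' S) := by
  refine csInf_eq_csInf_of_forall_exists_le_of_forall_gt_exists_le
    ⟨0, forall_mem_image.2 fun _ _ ↦ by positivity⟩ ?_ ?_
  · rintro _ ⟨P, hP, h2, hPS, rfl⟩
    refine ⟨_, mem_image_of_mem _ hPS, ?_⟩
    rw [Real.sq_sqrt (integral_nonneg fun _ ↦ sq_nonneg _), ← measureReal_def]
    exact sq_div_integral_add_sq_le_measureReal_Iic h2 (hb _ hPS)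
  · rintro _ ⟨⟨m, s⟩, hms, rfl⟩ z hz
    have hmb : m < b := hb _ hms
    have hcont : ContinuousAt (fun u : ℝ ↦ u ^ 2 / (s ^ 2 + u ^ 2)) (b - m) :=
      continuousAt_id.pow 2 |>.div (by fun_prop) (by have := sub_pos.2 hmb; positivity)
    obtain ⟨u, hzu, hu⟩ := (((hcont.eventually (gt_mem_nhds hz)).filter_mono
      nhdsWithin_le_nhds).and (self_mem_nhdsWithin (s := Ioi (b - m)))).exists
    obtain ⟨P, hP, h2, hmean, hvar, hPb⟩ :=
      exists_measure_integral_variance_measureReal_Iic (s := s) hmb.le hu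
    refine ⟨_, ⟨P, hP, h2, ?_, rfl⟩, ?_⟩
    · rwa [hmean, hvar, Real.sqrt_sq (hSpos _ hms).le]
    · rw [← measureReal_def, hPb]
      exact hzu.le

/-- Two-layer decomposition of the worst-case chance constraint over an
ambiguity set `S` of admissible (mean, standard deviation) pairs: the infimum
of `P (Iic b)` over probability measures whose mean/standard-deviation pair
lies in `S` equals the infimum over `(m, s) ∈ S` of the tight Cantelli value
`(b - m)² / (s² + (b - m)²)`. -/
theorem worst_case_chance_constraint_decomposition
    (S : Set (ℝ × ℝ)) (hS : S.Nonempty)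
    (hSpos : ∀ p ∈ S, 0 < p.2)
    (b : ℝ) (hb : ∀ p ∈ S, p.1 < b) :
    sInf {r : ℝ | ∃ P : Measure ℝ, IsProbabilityMeasure P ∧
        Integrable (fun x : ℝ => x ^ 2) P ∧
        ((∫ x, x ∂P), Real.sqrt (∫ x, (x - ∫ y, y ∂P) ^ 2 ∂P)) ∈ S ∧
        r = (P (Set.Iic b)).toReal} =
      sInf ((fun p : ℝ × ℝ => (b - p.1) ^ 2 / (p.2 ^ 2 + (b - p.1) ^ 2)) '' S) :=
  worst_case_chance_constraint_decomposition_general S hSpos b hb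
end

section
/- Let X and F be nonempty finite sets and g : X × F → ℝ. Consider any sequences (x_k) in X, (u_k) in F and (S_k) of subsets of F satisfying: S_0 = {u_0'} for some u_0' ∈ F; for each k, x_k minimizes x ↦ max_{u ∈ S_k} g(x, u) over X; u_k maximizes u ↦ g(x_k, u) over F; and S_{k+1} = S_k ∪ {u_k}. Then there exists an index k ≤ |F| such that u_k ∈ S_k, and for this k the point x_k minimizes the full robust objective x ↦ max_{u ∈ F} g(x, u) over X. Hence the column-and-constraint generation iteration terminates with an optimal first-stage decision after at most |F| iterations. (Abstract form of Propositions 1 and 2: finite convergence of the DDCCG/C&CG loop with iteration count bounded by the number of extreme scenarios.) -/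
/-!
Each iteration that does not repeat a scenario adds a new element of `F` to `S k`, so a repeat
must occur by iteration `|F|`. At a repeat, the worst case `u k` for `x k` over all of `F` already
lies in `S k`, so the full robust objective of `x k` equals its restricted one; the restricted
objective of any `x'` is at most its full one, and `x k` minimizes the restricted objective.
-/

namespace Finset

section InsertChain

variable {α : Type*} [DecidableEq α] {S : ℕ → Finset α} {u : ℕ → α}

theorem subset_of_insert_chain (hS : ∀ k, S (k + 1) = insert (u k) (S k)) {F : Finset α}
    (h0 : S 0 ⊆ F) (hu : ∀ k, u k ∈ F) (k : ℕ) : S k ⊆ F := by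
  induction k with
  | zero => exact h0
  | succ k ih => rw [hS]; exact insert_subset (hu k) ih

theorem monotone_of_insert_chain (hS : ∀ k, S (k + 1) = insert (u k) (S k)) : Monotone S :=
  monotone_nat_of_le_succ fun k => (hS k).symm ▸ subset_insert (u k) (S k)

theorem card_eq_add_of_insert_chain (hS : ∀ k, S (k + 1) = insert (u k) (S k)) {k : ℕ}
    (hnew : ∀ j < k, u j ∉ S j) : #(S k) = #(S 0) + k := by
  induction k with
  | zero => rfl
  | succ k ih =>
    rw [hS, card_insert_of_notMem (hnew k k.lt_succ_self),
      ih fun j hj => hnew j (hj.trans k.lt_succ_self), add_assoc]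

theorem exists_mem_of_insert_chain (hS : ∀ k, S (k + 1) = insert (u k) (S k)) {F : Finset α}
    (hSF : ∀ k, S k ⊆ F) : ∃ k, #(S 0) + k ≤ #F ∧ u k ∈ S k := by
  by_contra! hnone
  have h0 := card_le_card (hSF 0)
  have hcard := card_eq_add_of_insert_chain hS (k := #F - #(S 0) + 1) fun j hj =>
    hnone j (by omega)
  have := card_le_card (hSF (#F - #(S 0) + 1))
  omega

end InsertChain

theorem sup'_le_sup'_of_argmax_mem {ι κ α : Type*} [SemilatticeSup α] (g : ι → κ → α)
    {S F : Finset κ} (hS : S.Nonempty) (hF : F.Nonempty) (hSF : S ⊆ F) {x x' : ι} {w : κ}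
    (hw : w ∈ S) (hmax : ∀ v ∈ F, g x v ≤ g x w) (hmin : S.sup' hS (g x) ≤ S.sup' hS (g x')) :
    F.sup' hF (g x) ≤ F.sup' hF (g x') :=
  calc F.sup' hF (g x) ≤ g x w := sup'_le _ _ hmax
    _ ≤ S.sup' hS (g x) := le_sup' _ hw
    _ ≤ S.sup' hS (g x') := hmin
    _ ≤ F.sup' hF (g x') := sup'_mono _ hSF hS

end Finset

open Finset

theorem ccg_finite_convergence_general
    {ι κ : Type*} [DecidableEq κ]
    (X : Finset ι)
    (F : Finset κ) (hF : F.Nonempty)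
    (g : ι → κ → ℝ)
    (x : ℕ → ι) (u : ℕ → κ) (S : ℕ → Finset κ)
    (u0 : κ) (hu0 : u0 ∈ F)
    (hS0 : S 0 = {u0})
    (hSrec : ∀ k : ℕ, S (k + 1) = insert (u k) (S k))
    (hxmin : ∀ k : ℕ, ∀ x' ∈ X,
      sSup (g (x k) '' (S k : Set κ)) ≤ sSup (g x' '' (S k : Set κ)))
    (humem : ∀ k : ℕ, u k ∈ F)
    (humax : ∀ k : ℕ, ∀ v ∈ F, g (x k) v ≤ g (x k) (u k)) :
    ∃ k : ℕ, k ≤ F.card ∧ u k ∈ S k ∧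
      ∀ x' ∈ X, F.sup' hF (g (x k)) ≤ F.sup' hF (g x') := by
  have hSF := subset_of_insert_chain hSrec (hS0 ▸ singleton_subset_iff.2 hu0) humem
  obtain ⟨k, hk, hrepeat⟩ := exists_mem_of_insert_chain hSrec hSF
  rw [hS0, card_singleton] at hk
  have hSk : (S k).Nonempty :=
    (hS0 ▸ singleton_nonempty u0).mono (monotone_of_insert_chain hSrec k.zero_le)
  refine ⟨k, by omega, hrepeat, fun x' hx' => ?_⟩
  have hmin := hxmin k x' hx'
  rw [← sup'_eq_csSup_image _ hSk, ← sup'_eq_csSup_image _ hSk] at hmin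
  exact sup'_le_sup'_of_argmax_mem g hSk hF (hSF k) hrepeat (humax k) hmin

/-- Finite convergence of the column-and-constraint generation loop: starting
from a single scenario and adding, at each iteration, a worst-case scenario
for the current master solution, some iteration `k ≤ |F|` produces a repeated
scenario `u k ∈ S k`, and at that iteration the master solution `x k`
minimizes the full robust objective `x ↦ max_{u ∈ F} g (x, u)` over `X`. -/
theorem ccg_finite_convergence
    {ι κ : Type*} [DecidableEq κ]
    (X : Finset ι) (hX : X.Nonempty)
    (F : Finset κ) (hF : F.Nonempty)
    (g : ι → κ → ℝ)
    (x : ℕ → ι) (u : ℕ → κ) (S : ℕ → Finset κ)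
    (u0 : κ) (hu0 : u0 ∈ F)
    (hS0 : S 0 = {u0})
    (hSrec : ∀ k : ℕ, S (k + 1) = insert (u k) (S k))
    (hxmem : ∀ k : ℕ, x k ∈ X)
    (hxmin : ∀ k : ℕ, ∀ x' ∈ X,
      sSup (g (x k) '' (S k : Set κ)) ≤ sSup (g x' '' (S k : Set κ)))
    (humem : ∀ k : ℕ, u k ∈ F)
    (humax : ∀ k : ℕ, ∀ v ∈ F, g (x k) v ≤ g (x k) (u k)) :
    ∃ k : ℕ, k ≤ F.card ∧ u k ∈ S k ∧
      ∀ x' ∈ X, F.sup' hF (g (x k)) ≤ F.sup' hF (g x') :=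
  ccg_finite_convergence_general X F hF g x u S u0 hu0 hS0 hSrec hxmin humem humax
end
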